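/- arXiv:1709.03883 — 3 statements merged into one kernel-verified Lean document; each statement's English description precedes it below -/
import Mathlib

section
/- The midpoint-rule frequency error is cancelled by the surrogate modification to fourth order: with ω_s² = ω²(1 + ω²h²/12)/(1 − ω²h²/12), the numerical frequency Ω(h) defined by cos(Ω h) = (1 − ω_s²h²/4)/(1 + ω_s²h²/4) satisfies Ω(h) = ω + O(h⁴) as h → 0 (for fixed ω > 0). Equivalently, the Taylor expansion of Ω(h) in h has vanishing h² and h³ coefficients beyond ω. -/
/-!
Put `θ = ωh/2`. The surrogate makes `λh²/4 = t²` with `t² = θ²(3 + θ²)/(3 - θ²)`, and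
`arccos ((1 - t²)/(1 + t²)) = 2 arctan t`, so `Ωh - ωh = 2 (arctan t - arctan (tan θ))`.
Since arctan is 1-Lipschitz it suffices that `t - tan θ = O(θ⁵)`. Clearing denominators,
`t² - tan² θ` is a multiple of `θ²(3 + θ²) - (3 + 2θ² + θ⁴) sin² θ`, whose Taylor expansion
starts at `θ⁶` once `sin θ = θ - θ³/6 + O(θ⁵)` is substituted; dividing by `t + tan θ ≥ 2θ` gives `O(θ⁵)`.
-/

open Asymptotics

namespace Real

theorem lipschitzWith_one_arctan : LipschitzWith 1 arctan := by
  refine lipschitzWith_of_nnnorm_deriv_le differentiable_arctan fun x => ?_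
  rw [← NNReal.coe_le_coe, coe_nnnorm, NNReal.coe_one, deriv_arctan, norm_eq_abs,
    abs_of_pos (by positivity), div_le_one (by positivity)]
  nlinarith [sq_nonneg x]

theorem arccos_one_sub_sq_div_one_add_sq {t : ℝ} (ht : 0 ≤ t) :
    arccos ((1 - t ^ 2) / (1 + t ^ 2)) = 2 * arctan t := by
  have hcos : cos (2 * arctan t) = (1 - t ^ 2) / (1 + t ^ 2) := by
    rw [cos_two_mul, cos_sq_arctan]
    field_simp
    ring
  have harctan_nonneg : 0 ≤ arctan t := arctan_nonneg.mpr ht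
  rw [← hcos, arccos_cos (by positivity)]
  linarith [arctan_lt_pi_div_two t]

end Real

open Real

theorem abs_sq_mul_sub_sin_sq_le {θ : ℝ} (hθ : |θ| ≤ 1) :
    |θ ^ 2 * (3 + θ ^ 2) - (3 + 2 * θ ^ 2 + θ ^ 4) * sin θ ^ 2| ≤ |θ| ^ 6 := by
  set p := θ - θ ^ 3 / 6
  set e := sin θ - p
  have he : |e| ≤ |θ| ^ 5 / 100 := sin_bound hθ
  have hp : |p| ≤ |θ| := by
    rw [show p = θ * (1 - θ ^ 2 / 6) by ring, abs_mul]
    refine mul_le_of_le_one_right (abs_nonneg θ) (abs_le.mpr ⟨?_, ?_⟩) <;>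
      nlinarith [sq_abs θ, abs_nonneg θ, sq_nonneg θ]
  have hsplit : θ ^ 2 * (3 + θ ^ 2) - (3 + 2 * θ ^ 2 + θ ^ 4) * sin θ ^ 2
      = θ ^ 6 * (-5 / 12 + 5 * θ ^ 2 / 18 - θ ^ 4 / 36)
        - (3 + 2 * θ ^ 2 + θ ^ 4) * (e * (2 * p + e)) := by
    rw [show sin θ = p + e by ring]; ring
  have hθsq : θ ^ 2 ≤ 1 := by nlinarith [sq_abs θ, abs_nonneg θ]
  have hq₀ : 0 ≤ 3 + 2 * θ ^ 2 + θ ^ 4 := by positivity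
  have hq₁ : 3 + 2 * θ ^ 2 + θ ^ 4 ≤ 6 := by nlinarith [sq_nonneg θ]
  have hpoly : |-5 / 12 + 5 * θ ^ 2 / 18 - θ ^ 4 / 36| ≤ 5 / 12 :=
    abs_le.mpr ⟨by nlinarith [sq_nonneg θ], by nlinarith [sq_nonneg θ]⟩
  have he' : |e| ≤ |θ| := by
    linarith [pow_le_of_le_one (abs_nonneg θ) hθ (n := 5) (by norm_num), abs_nonneg θ]
  have hfac : |2 * p + e| ≤ 3 * |θ| := by
    calc |2 * p + e| ≤ |2 * p| + |e| := abs_add_le _ _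
      _ ≤ 3 * |θ| := by rw [abs_mul, abs_two]; linarith
  rw [hsplit]
  calc _ ≤ |θ ^ 6 * (-5 / 12 + 5 * θ ^ 2 / 18 - θ ^ 4 / 36)|
          + |(3 + 2 * θ ^ 2 + θ ^ 4) * (e * (2 * p + e))| := abs_sub _ _
    _ = |θ| ^ 6 * |-5 / 12 + 5 * θ ^ 2 / 18 - θ ^ 4 / 36|
          + (3 + 2 * θ ^ 2 + θ ^ 4) * (|e| * |2 * p + e|) := by
      rw [abs_mul, abs_mul, abs_mul, abs_of_nonneg hq₀, pow_abs]
    _ ≤ |θ| ^ 6 * (5 / 12) + 6 * (|θ| ^ 5 / 100 * (3 * |θ|)) := by gcongr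
    _ ≤ |θ| ^ 6 := by nlinarith [pow_nonneg (abs_nonneg θ) 6]

theorem abs_sub_tan_le {θ t : ℝ} (hθ₀ : 0 < θ) (hθ₁ : θ ≤ 1) (ht : 0 ≤ t)
    (ht_sq : t ^ 2 = θ ^ 2 * (3 + θ ^ 2) / (3 - θ ^ 2)) : |t - tan θ| ≤ θ ^ 5 := by
  have hθ_lt : θ < π / 2 := by linarith [pi_gt_three]
  have hcos : 1 / 2 ≤ cos θ := by nlinarith [one_sub_sq_div_two_le_cos (x := θ)]
  have hθ_le_t : θ ≤ t := by
    have : θ ^ 2 ≤ t ^ 2 := by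
      rw [ht_sq, le_div_iff₀ (by nlinarith)]
      nlinarith [sq_nonneg θ, pow_pos hθ₀ 4]
    nlinarith
  have hθ_le_tan : θ ≤ tan θ := (lt_tan hθ₀ hθ_lt).le
  have hsq_sub : t ^ 2 - tan θ ^ 2
      = (θ ^ 2 * (3 + θ ^ 2) - (3 + 2 * θ ^ 2 + θ ^ 4) * sin θ ^ 2) / ((3 - θ ^ 2) * cos θ ^ 2) := by
    have : 3 - θ ^ 2 ≠ 0 := by nlinarith
    have : cos θ ≠ 0 := by positivity
    rw [ht_sq, tan_eq_sin_div_cos, div_pow, sin_sq]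
    field_simp
    ring
  have hden : 1 / 2 ≤ (3 - θ ^ 2) * cos θ ^ 2 := by
    have hcos_sq : 1 / 4 ≤ cos θ ^ 2 := by nlinarith
    have hθ_sq : 2 ≤ 3 - θ ^ 2 := by nlinarith
    calc (1 : ℝ) / 2 = 2 * (1 / 4) := by norm_num
      _ ≤ _ := mul_le_mul hθ_sq hcos_sq (by norm_num) (by linarith)
  have hsq_bound : |t ^ 2 - tan θ ^ 2| ≤ 2 * θ ^ 6 := by
    have hnum := abs_sq_mul_sub_sin_sq_le (abs_le.mpr ⟨by linarith, hθ₁⟩)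
    rw [abs_of_pos hθ₀] at hnum
    have hden_pos : 0 < (3 - θ ^ 2) * cos θ ^ 2 := by linarith
    rw [hsq_sub, abs_div, abs_of_pos hden_pos, div_le_iff₀ hden_pos]
    nlinarith [pow_pos hθ₀ 6]
  refine le_of_mul_le_mul_right (a := 2 * θ) ?_ (by linarith)
  calc |t - tan θ| * (2 * θ) ≤ |t - tan θ| * (t + tan θ) :=
      mul_le_mul_of_nonneg_left (by linarith) (abs_nonneg _)
    _ = |t ^ 2 - tan θ ^ 2| := by
      rw [← abs_of_nonneg (by linarith : 0 ≤ t + tan θ), ← abs_mul]; ring_nf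
    _ ≤ θ ^ 5 * (2 * θ) := by linarith

theorem surrogate_mul_sq_div_four {ω h : ℝ} (hωh : ω ^ 2 * h ^ 2 ≠ 12) :
    ω ^ 2 * (1 + ω ^ 2 * h ^ 2 / 12) / (1 - ω ^ 2 * h ^ 2 / 12) * h ^ 2 / 4
      = (ω * h / 2) ^ 2 * (3 + (ω * h / 2) ^ 2) / (3 - (ω * h / 2) ^ 2) := by
  have : 12 - ω ^ 2 * h ^ 2 ≠ 0 := sub_ne_zero.mpr hωh.symm
  rw [show 1 - ω ^ 2 * h ^ 2 / 12 = (12 - ω ^ 2 * h ^ 2) / 12 by ring,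
    show 3 - (ω * h / 2) ^ 2 = (12 - ω ^ 2 * h ^ 2) / 4 by ring]
  field_simp
  ring

theorem abs_surrogate_frequency_sub_le {ω h : ℝ} (hω : 0 < ω) (h₀ : 0 < h) (hωh : ω * h ≤ 2) :
    |arccos ((1 - ω ^ 2 * (1 + ω ^ 2 * h ^ 2 / 12) / (1 - ω ^ 2 * h ^ 2 / 12) * h ^ 2 / 4)
        / (1 + ω ^ 2 * (1 + ω ^ 2 * h ^ 2 / 12) / (1 - ω ^ 2 * h ^ 2 / 12) * h ^ 2 / 4)) / h - ω|
      ≤ ω ^ 5 / 16 * h ^ 4 := by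
  have hωh₀ : 0 < ω * h := mul_pos hω h₀
  rw [surrogate_mul_sq_div_four (by nlinarith)]
  set θ := ω * h / 2 with hθ
  have hθ₀ : 0 < θ := by positivity
  have hθ₁ : θ ≤ 1 := by linarith
  have hx : 0 ≤ θ ^ 2 * (3 + θ ^ 2) / (3 - θ ^ 2) := by
    have : 0 < 3 - θ ^ 2 := by nlinarith
    positivity
  set t := √(θ ^ 2 * (3 + θ ^ 2) / (3 - θ ^ 2))
  have ht_sq : t ^ 2 = θ ^ 2 * (3 + θ ^ 2) / (3 - θ ^ 2) := sq_sqrt hx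
  rw [← ht_sq, arccos_one_sub_sq_div_one_add_sq (sqrt_nonneg _)]
  have hω_eq : ω = 2 * arctan (tan θ) / h := by
    rw [arctan_tan (by linarith [pi_pos]) (by linarith [pi_gt_three]), hθ]
    field_simp
  calc |2 * arctan t / h - ω| = 2 * |arctan t - arctan (tan θ)| / h := by
        rw [hω_eq, ← sub_div, ← mul_sub, abs_div, abs_mul, abs_two, abs_of_pos h₀]
    _ ≤ 2 * |t - tan θ| / h := by
        gcongr 2 * ?_ / h
        simpa [dist_eq] using lipschitzWith_one_arctan.dist_le_mul t (tan θ)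
    _ ≤ 2 * θ ^ 5 / h := by
        gcongr
        exact abs_sub_tan_le hθ₀ hθ₁ (sqrt_nonneg _) ht_sq
    _ = ω ^ 5 / 16 * h ^ 4 := by
        rw [hθ]
        field_simp
        ring

/-- the surrogate modification cancels the midpoint frequency error to
fourth order: with `λ(h) = ω²(1 + ω²h²/12)/(1 − ω²h²/12)` and `Ω(h)` defined by
`cos(Ω(h)h) = (1 − λh²/4)/(1 + λh²/4)`, one has `Ω(h) = ω + O(h⁴)` as `h → 0⁺`. -/
theorem stmt13 (ω : ℝ) (hω : 0 < ω) :
    (fun h : ℝ =>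
        Real.arccos
          ((1 - (ω ^ 2 * (1 + ω ^ 2 * h ^ 2 / 12) / (1 - ω ^ 2 * h ^ 2 / 12)) * h ^ 2 / 4)
            / (1 + (ω ^ 2 * (1 + ω ^ 2 * h ^ 2 / 12) / (1 - ω ^ 2 * h ^ 2 / 12)) * h ^ 2 / 4))
          / h - ω)
      =O[nhdsWithin (0:ℝ) (Set.Ioi 0)] fun h : ℝ => h ^ 4 := by
  rw [isBigO_iff]
  refine ⟨ω ^ 5 / 16, ?_⟩
  filter_upwards [Ioc_mem_nhdsGT (show (0 : ℝ) < 2 / ω by positivity)] with h ⟨h₀, h₁⟩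
  rw [norm_eq_abs, norm_eq_abs, abs_of_pos (pow_pos h₀ 4)]
  exact abs_surrogate_frequency_sub_le hω h₀ (by rwa [le_div_iff₀ hω, mul_comm] at h₁)
end

section
/- For the midpoint-rule quadrature applied to t ↦ L(q(t), q̇(t)) with q C⁴ and L C², the discrete Lagrangian satisfies L_d(q(t_k), q(t_{k+1})) = ∫_{t_k}^{t_{k+1}} L(q(t), q̇(t)) dt + O(h³): there exists C (depending on bounds for L and q and their derivatives on a compact neighborhood) such that |h·L((q(t_k)+q(t_{k+1}))/2, (q(t_{k+1})−q(t_k))/h) − ∫_{t_k}^{t_{k+1}} L(q(t), q̇(t)) dt| ≤ C h³. -/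
/-!
The midpoint rule integrates a function whose derivative is `K`-Lipschitz with error at most
`K h³ / 4`: about the midpoint `m`, the linear Taylor term `(t - m) • g' m` integrates to zero and
the remainder is `O(K (t - m)²)`. Applied to `t ↦ L(q t, q̇ t)` this compares the action integral
with `h L(q m, q̇ m)`. The discrete Lagrangian evaluates `L` instead at the averaged endpoints and at
the difference quotient; the former is `O(h²)`-close to `q m` by the same Taylor bound, the latter
is the midpoint-rule average of `q̇` and hence `O(h²)`-close to `q̇ m`. Since `L` is Lipschitz on a
compact ball containing all these points, the total error is `O(h³)`.
-/

open Set Metric intervalIntegral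
open scoped NNReal

variable {E : Type*} [NormedAddCommGroup E] [NormedSpace ℝ E]

theorem norm_sub_sub_smul_le_of_lipschitzOnWith {g g' : ℝ → E} {s : Set ℝ} {K : ℝ≥0}
    (hs : Convex ℝ s) (hg : ∀ t ∈ s, HasDerivWithinAt g (g' t) s t)
    (hg' : LipschitzOnWith K g' s) {x y : ℝ} (hx : x ∈ s) (hy : y ∈ s) :
    ‖g y - g x - (y - x) • g' x‖ ≤ K * |y - x| ^ 2 := by
  have hseg : uIcc x y ⊆ s := hs.ordConnected.uIcc_subset hx hy
  have hderiv : ∀ t ∈ uIcc x y, HasDerivWithinAt (fun t ↦ g t - (t - x) • g' x)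
      (g' t - g' x) (uIcc x y) t := fun t ht ↦
    ((hg t (hseg ht)).mono hseg).sub
      ((((hasDerivWithinAt_id t _).sub_const x).smul_const (g' x)).congr_deriv (one_smul ℝ _))
  have hbound : ∀ t ∈ uIcc x y, ‖g' t - g' x‖ ≤ K * |y - x| := fun t ht ↦
    calc ‖g' t - g' x‖ ≤ K * |t - x| := by
          simpa [dist_eq_norm] using hg'.dist_le_mul t (hseg ht) x hx
      _ ≤ K * |y - x| := mul_le_mul_of_nonneg_left (abs_sub_left_of_mem_uIcc ht) K.2
  have := (convex_uIcc x y).norm_image_sub_le_of_norm_hasDerivWithin_le hderiv hbound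
    left_mem_uIcc right_mem_uIcc
  simpa [sq, mul_assoc, sub_right_comm] using this

theorem norm_midpoint_sub_le_of_lipschitzOnWith_deriv {g g' : ℝ → E} {a b : ℝ} {K : ℝ≥0}
    (hab : a ≤ b) (hg : ∀ t ∈ Icc a b, HasDerivWithinAt g (g' t) (Icc a b) t)
    (hg' : LipschitzOnWith K g' (Icc a b)) :
    ‖(2 : ℝ)⁻¹ • (g a + g b) - g ((a + b) / 2)‖ ≤ K * (b - a) ^ 2 / 4 := by
  have hm : (a + b) / 2 ∈ Icc a b := ⟨by linarith, by linarith⟩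
  set m := (a + b) / 2
  have taylor := fun t (ht : t ∈ Icc a b) ↦
    norm_sub_sub_smul_le_of_lipschitzOnWith (convex_Icc a b) hg hg' hm ht
  have hsplit : (2 : ℝ)⁻¹ • (g a + g b) - g m
      = (2 : ℝ)⁻¹ • ((g a - g m - (a - m) • g' m) + (g b - g m - (b - m) • g' m)) := by
    simp only [m]; module
  have ham : |a - m| ^ 2 = (b - a) ^ 2 / 4 := by rw [sq_abs]; ring
  have hbm : |b - m| ^ 2 = (b - a) ^ 2 / 4 := by rw [sq_abs]; ring
  calc ‖(2 : ℝ)⁻¹ • (g a + g b) - g m‖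
      ≤ 2⁻¹ * (‖g a - g m - (a - m) • g' m‖ + ‖g b - g m - (b - m) • g' m‖) := by
        rw [hsplit, norm_smul, Real.norm_of_nonneg (by norm_num)]
        gcongr
        exact norm_add_le _ _
    _ ≤ 2⁻¹ * (K * |a - m| ^ 2 + K * |b - m| ^ 2) := by
        gcongr
        exacts [taylor a (left_mem_Icc.2 hab), taylor b (right_mem_Icc.2 hab)]
    _ = K * (b - a) ^ 2 / 4 := by rw [ham, hbm]; ring

noncomputable def midpointState (q : ℝ → E) (a b : ℝ) : E × E :=
  ((2 : ℝ)⁻¹ • (q a + q b), (b - a)⁻¹ • (q b - q a))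

theorem norm_midpointState_le {q q' : ℝ → E} {a b R : ℝ} (hab : a < b)
    (hq : ∀ t ∈ Icc a b, HasDerivWithinAt q (q' t) (Icc a b) t)
    (hR : ∀ t ∈ Icc a b, ‖(q t, q' t)‖ ≤ R) : ‖midpointState q a b‖ ≤ R := by
  have hpos : 0 < b - a := sub_pos.2 hab
  have hq_le : ∀ t ∈ Icc a b, ‖q t‖ ≤ R := fun t ht ↦ (norm_prod_le_iff.1 (hR t ht)).1
  have hq'_le : ∀ t ∈ Icc a b, ‖q' t‖ ≤ R := fun t ht ↦ (norm_prod_le_iff.1 (hR t ht)).2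
  refine norm_prod_le_iff.2 ⟨?_, ?_⟩
  · calc ‖(2 : ℝ)⁻¹ • (q a + q b)‖ ≤ 2⁻¹ * (‖q a‖ + ‖q b‖) := by
          rw [norm_smul, Real.norm_of_nonneg (by norm_num)]
          gcongr
          exact norm_add_le _ _
      _ ≤ R := by
          linarith [hq_le a (left_mem_Icc.2 hab.le), hq_le b (right_mem_Icc.2 hab.le)]
  · have hmvt := norm_image_sub_le_of_norm_deriv_le_segment' hq
      (fun t ht ↦ hq'_le t (Ico_subset_Icc_self ht)) b (right_mem_Icc.2 hab.le)
    change ‖(b - a)⁻¹ • (q b - q a)‖ ≤ R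
    rw [norm_smul, Real.norm_of_nonneg (inv_nonneg.2 hpos.le), inv_mul_le_iff₀ hpos]
    linarith

variable [CompleteSpace E]

theorem norm_integral_sub_midpoint_le_of_lipschitzOnWith_deriv {g g' : ℝ → E} {a b : ℝ}
    {K : ℝ≥0} (hab : a ≤ b) (hg : ∀ t ∈ Icc a b, HasDerivWithinAt g (g' t) (Icc a b) t)
    (hg' : LipschitzOnWith K g' (Icc a b)) :
    ‖(∫ t in a..b, g t) - (b - a) • g ((a + b) / 2)‖ ≤ K * (b - a) ^ 3 / 4 := by
  have hm : (a + b) / 2 ∈ Icc a b := ⟨by linarith, by linarith⟩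
  set m := (a + b) / 2
  have hint : IntervalIntegrable g MeasureTheory.volume a b :=
    ContinuousOn.intervalIntegrable_of_Icc hab fun t ht ↦ (hg t ht).continuousWithinAt
  have hodd : ∫ t in a..b, (t - m) = 0 := by
    rw [integral_sub intervalIntegrable_id intervalIntegrable_const, integral_id, integral_const,
      smul_eq_mul]
    ring
  have hsplit : (∫ t in a..b, g t) - (b - a) • g m = ∫ t in a..b, (g t - g m - (t - m) • g' m) := by
    rw [integral_sub (hint.sub intervalIntegrable_const)
        (Continuous.intervalIntegrable (by fun_prop) _ _),
      integral_sub hint intervalIntegrable_const, integral_const,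
      intervalIntegral.integral_smul_const, hodd, zero_smul, sub_zero]
  rw [hsplit]
  calc ‖∫ t in a..b, (g t - g m - (t - m) • g' m)‖ ≤ K * (b - a) ^ 2 / 4 * |b - a| := by
        refine norm_integral_le_of_norm_le_const fun t ht ↦ ?_
        have ht' : t ∈ Icc a b := by rw [uIoc_of_le hab] at ht; exact Ioc_subset_Icc_self ht
        calc ‖g t - g m - (t - m) • g' m‖ ≤ K * |t - m| ^ 2 :=
              norm_sub_sub_smul_le_of_lipschitzOnWith (convex_Icc a b) hg hg' hm ht'
          _ ≤ K * (b - a) ^ 2 / 4 := by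
              rw [mul_div_assoc]
              gcongr
              rw [sq_abs]
              simp only [m]
              nlinarith [mul_nonneg (sub_nonneg.2 ht'.1) (sub_nonneg.2 ht'.2)]
    _ = K * (b - a) ^ 3 / 4 := by rw [abs_of_nonneg (sub_nonneg.2 hab)]; ring

theorem norm_slope_sub_deriv_midpoint_le {g g' g'' : ℝ → E} {a b : ℝ} {K : ℝ≥0} (hab : a < b)
    (hg : ∀ t ∈ Icc a b, HasDerivWithinAt g (g' t) (Icc a b) t)
    (hg' : ∀ t ∈ Icc a b, HasDerivWithinAt g' (g'' t) (Icc a b) t)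
    (hg'' : LipschitzOnWith K g'' (Icc a b)) :
    ‖(b - a)⁻¹ • (g b - g a) - g' ((a + b) / 2)‖ ≤ K * (b - a) ^ 2 / 4 := by
  have hftc : ∫ t in a..b, g' t = g b - g a :=
    integral_eq_sub_of_hasDerivAt_of_le hab.le (fun t ht ↦ (hg t ht).continuousWithinAt)
      (fun t ht ↦ (hg t (Ioo_subset_Icc_self ht)).hasDerivAt (Icc_mem_nhds ht.1 ht.2))
      (ContinuousOn.intervalIntegrable_of_Icc hab.le fun t ht ↦ (hg' t ht).continuousWithinAt)
  have hpos : 0 < b - a := sub_pos.2 hab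
  calc ‖(b - a)⁻¹ • (g b - g a) - g' ((a + b) / 2)‖
      = (b - a)⁻¹ * ‖(∫ t in a..b, g' t) - (b - a) • g' ((a + b) / 2)‖ := by
        rw [hftc, ← norm_smul_of_nonneg (inv_nonneg.2 hpos.le), smul_sub _ (g b - g a), smul_smul,
          inv_mul_cancel₀ hpos.ne', one_smul]
    _ ≤ (b - a)⁻¹ * (K * (b - a) ^ 3 / 4) := by
        gcongr
        exact norm_integral_sub_midpoint_le_of_lipschitzOnWith_deriv hab.le hg' hg''
    _ = K * (b - a) ^ 2 / 4 := by field_simp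

theorem norm_midpointState_sub_le {q q' q'' : ℝ → E} {a b : ℝ} {K₁ K₂ : ℝ≥0} (hab : a < b)
    (hq : ∀ t ∈ Icc a b, HasDerivWithinAt q (q' t) (Icc a b) t)
    (hq' : ∀ t ∈ Icc a b, HasDerivWithinAt q' (q'' t) (Icc a b) t)
    (hK₁ : LipschitzOnWith K₁ q' (Icc a b)) (hK₂ : LipschitzOnWith K₂ q'' (Icc a b)) :
    ‖midpointState q a b - (q ((a + b) / 2), q' ((a + b) / 2))‖ ≤ (K₁ + K₂) * (b - a) ^ 2 / 4 := by
  refine norm_prod_le_iff.2 ⟨?_, ?_⟩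
  · refine (norm_midpoint_sub_le_of_lipschitzOnWith_deriv hab.le hq hK₁).trans ?_
    gcongr
    exact le_add_of_nonneg_right K₂.2
  · refine (norm_slope_sub_deriv_midpoint_le hab hq hq' hK₂).trans ?_
    gcongr
    exact le_add_of_nonneg_left K₁.2

theorem abs_mul_midpointState_sub_integral_le {q q' q'' : ℝ → E} {Λ : E × E → ℝ} {φ' : ℝ → ℝ}
    {S : Set (E × E)} {a b : ℝ} {K K₁ K₂ K₃ : ℝ≥0} (hab : a < b)
    (hq : ∀ t ∈ Icc a b, HasDerivWithinAt q (q' t) (Icc a b) t)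
    (hq' : ∀ t ∈ Icc a b, HasDerivWithinAt q' (q'' t) (Icc a b) t)
    (hK₁ : LipschitzOnWith K₁ q' (Icc a b)) (hK₂ : LipschitzOnWith K₂ q'' (Icc a b))
    (hΛ : LipschitzOnWith K Λ S) (hS : midpointState q a b ∈ S)
    (hSm : (q ((a + b) / 2), q' ((a + b) / 2)) ∈ S)
    (hφ : ∀ t ∈ Icc a b, HasDerivWithinAt (fun t ↦ Λ (q t, q' t)) (φ' t) (Icc a b) t)
    (hK₃ : LipschitzOnWith K₃ φ' (Icc a b)) :
    |(b - a) * Λ (midpointState q a b) - ∫ t in a..b, Λ (q t, q' t)|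
      ≤ (K * (K₁ + K₂) / 4 + K₃ / 4) * (b - a) ^ 3 := by
  set m := (a + b) / 2
  set x := midpointState q a b
  set φ := fun t ↦ Λ (q t, q' t)
  have hquad := norm_integral_sub_midpoint_le_of_lipschitzOnWith_deriv hab.le hφ hK₃
  have hΛx : |Λ x - φ m| ≤ K * ((K₁ + K₂) * (b - a) ^ 2 / 4) := by
    rw [← Real.dist_eq]
    exact (hΛ.dist_le_mul x hS _ hSm).trans
      (by rw [dist_eq_norm]; gcongr; exact norm_midpointState_sub_le hab hq hq' hK₁ hK₂)
  calc |(b - a) * Λ x - ∫ t in a..b, φ t|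
      = |(b - a) * (Λ x - φ m) - ((∫ t in a..b, φ t) - (b - a) • φ m)| := by
        rw [smul_eq_mul]; ring_nf
    _ ≤ |(b - a) * (Λ x - φ m)| + ‖(∫ t in a..b, φ t) - (b - a) • φ m‖ := abs_sub _ _
    _ = (b - a) * |Λ x - φ m| + ‖(∫ t in a..b, φ t) - (b - a) • φ m‖ := by
        rw [abs_mul, abs_of_pos (sub_pos.2 hab)]
    _ ≤ (b - a) * (K * ((K₁ + K₂) * (b - a) ^ 2 / 4)) + K₃ * (b - a) ^ 3 / 4 := by gcongr
    _ = (K * (K₁ + K₂) / 4 + K₃ / 4) * (b - a) ^ 3 := by ring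

theorem stmt15_general (n : ℕ) (q : ℝ → (Fin n → ℝ)) (hq : ContDiff ℝ 4 q)
    (L : (Fin n → ℝ) → (Fin n → ℝ) → ℝ)
    (hL : ContDiff ℝ 2 (fun p : (Fin n → ℝ) × (Fin n → ℝ) => L p.1 p.2))
    (a b : ℝ) :
    ∃ C : ℝ, ∀ tk tk1 : ℝ, a ≤ tk → tk < tk1 → tk1 ≤ b →
      |(tk1 - tk) * L ((2:ℝ)⁻¹ • (q tk + q tk1)) ((tk1 - tk)⁻¹ • (q tk1 - q tk))
          - ∫ t in tk..tk1, L (q t) (deriv q t)|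
        ≤ C * (tk1 - tk) ^ 3 := by
  set v := deriv q
  have hv : ContDiff ℝ 3 v := hq.deriv'
  have hf : ContDiff ℝ 2 fun t ↦ L (q t) (v t) :=
    hL.comp ((hq.of_le (by norm_num)).prodMk (hv.of_le (by norm_num)))
  have hq' (s : Set ℝ) (t : ℝ) : HasDerivWithinAt q (v t) s t :=
    (hq.differentiable (by norm_num) t).hasDerivAt.hasDerivWithinAt
  have hv' (s : Set ℝ) (t : ℝ) : HasDerivWithinAt v (deriv v t) s t :=
    (hv.differentiable (by norm_num) t).hasDerivAt.hasDerivWithinAt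
  have hf' (s : Set ℝ) (t : ℝ) : HasDerivWithinAt (fun t ↦ L (q t) (v t)) (deriv _ t) s t :=
    (hf.differentiable (by norm_num) t).hasDerivAt.hasDerivWithinAt
  obtain ⟨R, hR⟩ := isCompact_Icc.exists_bound_of_continuousOn (s := Icc a b)
    (hq.continuous.prodMk hv.continuous).continuousOn
  obtain ⟨Kv, hKv⟩ :=
    hv.contDiffOn.exists_lipschitzOnWith (by norm_num) (convex_Icc a b) isCompact_Icc
  obtain ⟨Kv', hKv'⟩ := hv.deriv'.contDiffOn.exists_lipschitzOnWith (n := 2) (by norm_num)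
    (convex_Icc a b) isCompact_Icc
  obtain ⟨Kf', hKf'⟩ := hf.deriv'.contDiffOn.exists_lipschitzOnWith (n := 1) (by norm_num)
    (convex_Icc a b) isCompact_Icc
  obtain ⟨KL, hKL⟩ := hL.contDiffOn.exists_lipschitzOnWith (by norm_num)
    (convex_closedBall 0 R) (isCompact_closedBall 0 R)
  refine ⟨KL * (Kv + Kv') / 4 + Kf' / 4, fun s u hs hsu hu ↦ ?_⟩
  have hsub : Icc s u ⊆ Icc a b := Icc_subset_Icc hs hu
  exact abs_mul_midpointState_sub_integral_le hsu (fun t _ ↦ hq' _ t) (fun t _ ↦ hv' _ t)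
    (hKv.mono hsub) (hKv'.mono hsub) hKL
    (mem_closedBall_zero_iff.2 (norm_midpointState_le hsu (fun t _ ↦ hq' _ t)
      fun t ht ↦ hR t (hsub ht)))
    (mem_closedBall_zero_iff.2 (hR _ (hsub ⟨by linarith, by linarith⟩)))
    (fun t _ ↦ hf' _ t) (hKf'.mono hsub)

/-- second-order accuracy of the midpoint discrete Lagrangian:
`|h·L((q(t_k)+q(t_{k+1}))/2, (q(t_{k+1})−q(t_k))/h) − ∫_{t_k}^{t_{k+1}} L(q, q̇)| ≤ C h³`,
uniformly over subintervals of a fixed compact interval `[a, b]`. -/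
theorem stmt15 (n : ℕ) (q : ℝ → (Fin n → ℝ)) (hq : ContDiff ℝ 4 q)
    (L : (Fin n → ℝ) → (Fin n → ℝ) → ℝ)
    (hL : ContDiff ℝ 2 (fun p : (Fin n → ℝ) × (Fin n → ℝ) => L p.1 p.2))
    (a b : ℝ) (hab : a < b) :
    ∃ C : ℝ, ∀ tk tk1 : ℝ, a ≤ tk → tk < tk1 → tk1 ≤ b →
      |(tk1 - tk) * L ((2:ℝ)⁻¹ • (q tk + q tk1)) ((tk1 - tk)⁻¹ • (q tk1 - q tk))
          - ∫ t in tk..tk1, L (q t) (deriv q t)|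
        ≤ C * (tk1 - tk) ^ 3 :=
  stmt15_general n q hq L hL a b
end

section
/- Exactness of the surrogate map for the linear oscillator to fourth order: let q(t) = sin(ωt)/ω solve q̈ = −ω²q with q(0)=0, q̇(0)=1, and let (q_k) solve the surrogate midpoint recurrence q_{k+1} = 2((1 − λh²/4)/(1 + λh²/4))q_k − q_{k−1} with λ = ω²(1 + ω²h²/12)/(1 − ω²h²/12), initialized so that q_0 = q(0) and q_1 = q(h) + O(h⁵). Then q_2 − q(2h) = O(h⁵) as h → 0. -/
/-!
Write `x = ω²h²`. The surrogate stiffness turns the midpoint coefficient into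
`α = 2(48 - 16x - x²)/(48 + 8x + x²) = 2 - x + O(x²)`, and `2 cos(ωh) = 2 - x + O(x²)` as
well. Since `q(2h) = 2 cos(ωh) q(h)`, the one-step error splits as
`q₂ - q(2h) = α (q₁ - q(h)) + q(h) (α - 2 cos(ωh))`, a bounded multiple of an `O(h⁵)` term
plus `O(h) · O(h⁴)`.
-/

open Real Filter Topology Asymptotics

noncomputable def surrogateStiffness (ω h : ℝ) : ℝ :=
  ω ^ 2 * (1 + ω ^ 2 * h ^ 2 / 12) / (1 - ω ^ 2 * h ^ 2 / 12)

/-- The midpoint rule for `q̈ = -λq` with step `h` reads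
`q_{k+1} = midpointCoeff (λh²) q_k - q_{k-1}`. -/
noncomputable def midpointCoeff (y : ℝ) : ℝ :=
  2 * (1 - y / 4) / (1 + y / 4)

theorem surrogateStiffness_mul_sq (ω h : ℝ) :
    surrogateStiffness ω h * h ^ 2
      = (ω * h) ^ 2 * (1 + (ω * h) ^ 2 / 12) / (1 - (ω * h) ^ 2 / 12) := by
  unfold surrogateStiffness
  ring

theorem midpointCoeff_sub {x : ℝ} (hx : x ≠ 12) :
    midpointCoeff (x * (1 + x / 12) / (1 - x / 12)) - (2 - x)
      = x ^ 2 * (4 + x) / (48 + 8 * x + x ^ 2) := by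
  have h12 : 12 - x ≠ 0 := sub_ne_zero.2 hx.symm
  have hD : 48 + 8 * x + x ^ 2 ≠ 0 := by nlinarith [sq_nonneg (x + 4)]
  have hnum : 1 - x * (1 + x / 12) / (1 - x / 12) / 4
      = (48 - 16 * x - x ^ 2) / (4 * (12 - x)) := by
    field_simp; ring
  have hden : 1 + x * (1 + x / 12) / (1 - x / 12) / 4
      = (48 + 8 * x + x ^ 2) / (4 * (12 - x)) := by
    field_simp; ring
  unfold midpointCoeff
  rw [hnum, hden, mul_div_assoc, div_div_div_cancel_right₀ (by simpa using h12),
    eq_div_iff hD, sub_mul, mul_assoc, div_mul_cancel₀ _ hD]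
  ring

theorem abs_midpointCoeff_sub_le {x : ℝ} (hx₀ : 0 ≤ x) (hx : x ≠ 12) :
    |midpointCoeff (x * (1 + x / 12) / (1 - x / 12)) - (2 - x)| ≤ x ^ 2 := by
  have hD : 0 < 48 + 8 * x + x ^ 2 := by positivity
  rw [midpointCoeff_sub hx, abs_of_nonneg (by positivity), div_le_iff₀ hD]
  nlinarith [sq_nonneg x, pow_nonneg hx₀ 3, pow_nonneg hx₀ 4]

theorem continuousAt_midpointCoeff_surrogateStiffness (ω : ℝ) :
    ContinuousAt (fun h => midpointCoeff (surrogateStiffness ω h * h ^ 2)) 0 := by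
  unfold midpointCoeff surrogateStiffness
  fun_prop (disch := norm_num)

theorem midpointCoeff_surrogateStiffness_isBigO_one (ω : ℝ) :
    (fun h => midpointCoeff (surrogateStiffness ω h * h ^ 2)) =O[𝓝 0] fun _ => (1 : ℝ) :=
  (continuousAt_midpointCoeff_surrogateStiffness ω).tendsto.isBigO_one ℝ

theorem midpointCoeff_surrogateStiffness_sub_isBigO (ω : ℝ) :
    (fun h => midpointCoeff (surrogateStiffness ω h * h ^ 2) - (2 - (ω * h) ^ 2))
      =O[𝓝 0] fun h => h ^ 4 := by
  have hne : ∀ᶠ h in 𝓝 (0 : ℝ), (ω * h) ^ 2 ≠ 12 :=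
    (by fun_prop : Continuous fun h : ℝ => (ω * h) ^ 2).continuousAt.eventually_ne (by simp)
  refine IsBigO.of_bound (ω ^ 4) ?_
  filter_upwards [hne] with h hh
  rw [surrogateStiffness_mul_sq, Real.norm_eq_abs, norm_pow, Real.norm_eq_abs]
  calc _ ≤ ((ω * h) ^ 2) ^ 2 := abs_midpointCoeff_sub_le (sq_nonneg _) hh
    _ = ω ^ 4 * |h| ^ 4 := by rw [show |h| ^ 4 = (|h| ^ 2) ^ 2 by ring, sq_abs]; ring

theorem cos_sub_isBigO_pow_four :
    (fun y => cos y - (1 - y ^ 2 / 2)) =O[𝓝 0] fun y => y ^ 4 := by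
  refine IsBigO.of_bound (5 / 96) ?_
  filter_upwards [Metric.closedBall_mem_nhds (0 : ℝ) one_pos] with y hy
  rw [Metric.mem_closedBall, dist_zero_right] at hy
  simpa [mul_comm] using Real.cos_bound hy

theorem two_cos_mul_sub_isBigO (ω : ℝ) :
    (fun h => 2 * cos (ω * h) - (2 - (ω * h) ^ 2)) =O[𝓝 0] fun h => h ^ 4 := by
  have h := (cos_sub_isBigO_pow_four.comp_tendsto
    ((continuous_const_mul ω).tendsto' 0 0 (mul_zero ω))).const_mul_left 2
  refine (h.trans ?_).congr_left fun h => by simp only [Function.comp_apply]; ring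
  simpa [Function.comp_def, mul_pow] using
    isBigO_const_mul_self (ω ^ 4) (fun h : ℝ => h ^ 4) (𝓝 0)

theorem midpointCoeff_surrogateStiffness_sub_two_cos_isBigO (ω : ℝ) :
    (fun h => midpointCoeff (surrogateStiffness ω h * h ^ 2) - 2 * cos (ω * h))
      =O[𝓝 0] fun h => h ^ 4 :=
  ((midpointCoeff_surrogateStiffness_sub_isBigO ω).sub (two_cos_mul_sub_isBigO ω)).congr_left
    fun h => by ring

theorem abs_sin_mul_div_le (ω h : ℝ) : |sin (ω * h) / ω| ≤ |h| := by
  rcases eq_or_ne ω 0 with rfl | hω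
  · simp
  rw [abs_div, div_le_iff₀ (abs_pos.2 hω), mul_comm, ← abs_mul]
  exact abs_sin_le_abs

theorem sin_mul_div_isBigO (ω : ℝ) : (fun h => sin (ω * h) / ω) =O[𝓝 0] fun h => h :=
  IsBigO.of_bound 1 <| .of_forall fun h => by
    simpa only [Real.norm_eq_abs, one_mul] using abs_sin_mul_div_le ω h

theorem stmt18_general (ω : ℝ) (q1 : ℝ → ℝ)
    (hq1 : (fun h : ℝ => q1 h - Real.sin (ω * h) / ω)
      =O[nhdsWithin (0:ℝ) (Set.Ioi 0)] fun h : ℝ => h ^ 5) :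
    (fun h : ℝ =>
        (2 * (1 - (ω ^ 2 * (1 + ω ^ 2 * h ^ 2 / 12) / (1 - ω ^ 2 * h ^ 2 / 12)) * h ^ 2 / 4)
            / (1 + (ω ^ 2 * (1 + ω ^ 2 * h ^ 2 / 12) / (1 - ω ^ 2 * h ^ 2 / 12)) * h ^ 2 / 4))
          * q1 h - 0
        - Real.sin (ω * (2 * h)) / ω)
      =O[nhdsWithin (0:ℝ) (Set.Ioi 0)] fun h : ℝ => h ^ 5 := by
  set α := fun h => midpointCoeff (surrogateStiffness ω h * h ^ 2)
  have hsplit : ∀ h, α h * q1 h - 0 - sin (ω * (2 * h)) / ω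
      = α h * (q1 h - sin (ω * h) / ω) + sin (ω * h) / ω * (α h - 2 * cos (ω * h)) :=
    fun h => by rw [mul_left_comm, sin_two_mul]; ring
  show (fun h => α h * q1 h - 0 - sin (ω * (2 * h)) / ω) =O[_] _
  simp only [hsplit]
  refine IsBigO.add ?_ ?_
  · simpa using ((midpointCoeff_surrogateStiffness_isBigO_one ω).mono nhdsWithin_le_nhds).mul hq1
  · simpa [← pow_succ'] using ((sin_mul_div_isBigO ω).mul
      (midpointCoeff_surrogateStiffness_sub_two_cos_isBigO ω)).mono nhdsWithin_le_nhds

/-- one-step fifth-order accuracy of the surrogate midpoint integrator for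
the oscillator: with `q(t) = sin(ωt)/ω`, `q₀ = 0`, `q₁ = q(h) + O(h⁵)`, and
`q₂ = α(h)·q₁ − q₀` where `α(h) = 2(1 − λh²/4)/(1 + λh²/4)` and
`λ = ω²(1 + ω²h²/12)/(1 − ω²h²/12)`, one has `q₂ − q(2h) = O(h⁵)` as `h → 0⁺`. -/
theorem stmt18 (ω : ℝ) (hω : 0 < ω) (q1 : ℝ → ℝ)
    (hq1 : (fun h : ℝ => q1 h - Real.sin (ω * h) / ω)
      =O[nhdsWithin (0:ℝ) (Set.Ioi 0)] fun h : ℝ => h ^ 5) :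
    (fun h : ℝ =>
        (2 * (1 - (ω ^ 2 * (1 + ω ^ 2 * h ^ 2 / 12) / (1 - ω ^ 2 * h ^ 2 / 12)) * h ^ 2 / 4)
            / (1 + (ω ^ 2 * (1 + ω ^ 2 * h ^ 2 / 12) / (1 - ω ^ 2 * h ^ 2 / 12)) * h ^ 2 / 4))
          * q1 h - 0
        - Real.sin (ω * (2 * h)) / ω)
      =O[nhdsWithin (0:ℝ) (Set.Ioi 0)] fun h : ℝ => h ^ 5 :=
  stmt18_general ω q1 hq1
end
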